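/- arXiv:2302.07084 — 3 statements merged into one kernel-verified Lean document; each statement's English description precedes it below -/
import Mathlib

section
/- Let G be a finite connected weighted undirected graph on n ≥ 2 vertices with symmetric nonnegative weight matrix A, all degrees d_u = Σ_v A_{uv} positive, and Laplacian L = D − A. For any two distinct vertices u and v, the effective resistance satisfies R_{u,v} ≥ (1/2)(1/d_u + 1/d_v); equivalently, there exists a vector x : V → ℝ with xᵀ L x > 0 such that (x_u − x_v)² / (xᵀ L x) ≥ (1/2)(1/d_u + 1/d_v). -/
open Matrix

/-- **Lower bound on effective resistance (Lovász).** For a finite connected weighted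
undirected graph on `n ≥ 2` vertices with symmetric nonnegative weights, positive degrees,
and Laplacian `L = D - A`, the effective resistance between distinct vertices `u, v` —
defined variationally as `sup { (x_u - x_v)² / (xᵀ L x) : xᵀ L x > 0 }` — satisfies
`R_{u,v} ≥ (1/2)(1/d_u + 1/d_v)`: there exists a test vector `x` with `xᵀ L x > 0`
achieving at least this ratio. -/
theorem effective_resistance_lower_bound {n : ℕ} (hn : 2 ≤ n)
    (A : Matrix (Fin n) (Fin n) ℝ)
    (hsymm : A.IsSymm) (hnonneg : ∀ i j, 0 ≤ A i j)
    (hdeg : ∀ u : Fin n, 0 < ∑ w, A u w)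
    (hconn : (SimpleGraph.fromRel (fun u v : Fin n => 0 < A u v)).Connected)
    (u v : Fin n) (huv : u ≠ v) :
    ∃ x : Fin n → ℝ,
      0 < x ⬝ᵥ ((Matrix.diagonal (fun w => ∑ z, A w z) - A) *ᵥ x) ∧
      (1 / 2) * (1 / (∑ z, A u z) + 1 / (∑ z, A v z))
        ≤ (x u - x v) ^ 2
            / (x ⬝ᵥ ((Matrix.diagonal (fun w => ∑ z, A w z) - A) *ᵥ x)) := by
  classical
  set d : Fin n → ℝ := fun w => ∑ z, A w z with hd
  have hdu : 0 < d u := hdeg u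
  have hdv : 0 < d v := hdeg v
  have hAsym : ∀ i j, A j i = A i j := fun i j => congrFun (congrFun hsymm i) j
  -- test vector
  set x : Fin n → ℝ := fun z => if z = u then (d u)⁻¹ else if z = v then -(d v)⁻¹ else 0 with hx
  have hxu : x u = (d u)⁻¹ := by simp [hx]
  have hxv : x v = -(d v)⁻¹ := by simp [hx, huv.symm]
  have hx0 : ∀ z, z ≠ u → z ≠ v → x z = 0 := by intro z h1 h2; simp [hx, h1, h2]
  -- reduce sums over the support {u, v}
  have hsum : ∀ g : Fin n → ℝ, ∑ i, x i * g i = x u * g u + x v * g v := by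
    intro g
    rw [← Finset.sum_subset (Finset.subset_univ ({u, v} : Finset (Fin n)))
      (by intro i _ hi
          simp only [Finset.mem_insert, Finset.mem_singleton, not_or] at hi
          rw [hx0 i hi.1 hi.2, zero_mul])]
    rw [Finset.sum_pair huv]
  set L : Matrix (Fin n) (Fin n) ℝ := Matrix.diagonal d - A with hL
  have hLuu : L u u = d u - A u u := by simp [hL, Matrix.diagonal_apply_eq]
  have hLvv : L v v = d v - A v v := by simp [hL, Matrix.diagonal_apply_eq]
  have hLuv : L u v = -A u v := by simp [hL, Matrix.diagonal_apply_ne _ huv]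
  have hLvu : L v u = -A u v := by
    simp [hL, Matrix.diagonal_apply_ne _ huv.symm, hAsym u v]
  -- compute the quadratic form
  have hQ : x ⬝ᵥ (L *ᵥ x)
      = (d u)⁻¹ + (d v)⁻¹ - A u u * (d u)⁻¹ ^ 2 - A v v * (d v)⁻¹ ^ 2
        + 2 * A u v * ((d u)⁻¹ * (d v)⁻¹) := by
    have hinner : ∀ i, (L *ᵥ x) i = x u * L i u + x v * L i v := by
      intro i
      have : (L *ᵥ x) i = ∑ j, x j * L i j := by
        simp [Matrix.mulVec, dotProduct, mul_comm]
      rw [this, hsum]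
    have : x ⬝ᵥ (L *ᵥ x) = ∑ i, x i * (L *ᵥ x) i := rfl
    rw [this, hsum, hinner, hinner, hLuu, hLvv, hLuv, hLvu, hxu, hxv]
    have h1 : d u - A u u = d u - A u u := rfl
    field_simp
    ring
  -- positivity: u has a neighbor w with A u w > 0
  obtain ⟨p⟩ := hconn.preconnected u v
  have hQpos : 0 < x ⬝ᵥ (L *ᵥ x) := by
    cases p with
    | nil => exact absurd rfl huv
    | cons h q =>
      rename_i w
      rw [SimpleGraph.fromRel_adj] at h
      obtain ⟨hwu, hA⟩ := h
      have hAuw : 0 < A u w := by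
        rcases hA with h' | h'
        · exact h'
        · rwa [hAsym u w] at h'
      rw [hQ]
      have hAuu : A u u + A u w ≤ d u := by
        have : ({u, w} : Finset (Fin n)).sum (A u) ≤ ∑ z, A u z :=
          Finset.sum_le_sum_of_subset_of_nonneg (Finset.subset_univ _)
            (fun i _ _ => hnonneg u i)
        rwa [Finset.sum_pair hwu] at this
      have hAvv : A v v ≤ d v := by
        have : ({v} : Finset (Fin n)).sum (A v) ≤ ∑ z, A v z :=
          Finset.sum_le_sum_of_subset_of_nonneg (Finset.subset_univ _)
            (fun i _ _ => hnonneg v i)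
        simpa using this
      have h2 : 0 ≤ (d v)⁻¹ - A v v * (d v)⁻¹ ^ 2 := by
        have := mul_le_mul_of_nonneg_right hAvv (by positivity : (0:ℝ) ≤ (d v)⁻¹ ^ 2)
        have hdv2 : d v * (d v)⁻¹ ^ 2 = (d v)⁻¹ := by
          field_simp
        nlinarith [this]
      by_cases hwv : w = v
      · -- then A u v > 0
        have hAuv : 0 < A u v := hwv ▸ hAuw
        have h1 : 0 ≤ (d u)⁻¹ - A u u * (d u)⁻¹ ^ 2 := by
          have hle : A u u ≤ d u := le_trans (le_add_of_nonneg_right (hnonneg u w)) hAuu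
          have := mul_le_mul_of_nonneg_right hle (by positivity : (0:ℝ) ≤ (d u)⁻¹ ^ 2)
          have hdu2 : d u * (d u)⁻¹ ^ 2 = (d u)⁻¹ := by field_simp
          nlinarith [this]
        have h3 : 0 < 2 * A u v * ((d u)⁻¹ * (d v)⁻¹) := by positivity
        linarith
      · -- then w ≠ v, so d u - A u u ≥ A u w > 0
        have h1 : A u w * (d u)⁻¹ ^ 2 ≤ (d u)⁻¹ - A u u * (d u)⁻¹ ^ 2 := by
          have := mul_le_mul_of_nonneg_right hAuu (by positivity : (0:ℝ) ≤ (d u)⁻¹ ^ 2)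
          have hdu2 : d u * (d u)⁻¹ ^ 2 = (d u)⁻¹ := by field_simp
          nlinarith [this]
        have h3 : 0 ≤ 2 * A u v * ((d u)⁻¹ * (d v)⁻¹) := by
          have := hnonneg u v; positivity
        have h4 : 0 < A u w * (d u)⁻¹ ^ 2 := by positivity
        linarith
  refine ⟨x, hQpos, ?_⟩
  -- upper bound on Q: Q ≤ 2 * ((d u)⁻¹ + (d v)⁻¹)
  have hAuv_le_du : A u v ≤ d u := by
    have : ({v} : Finset (Fin n)).sum (A u) ≤ ∑ z, A u z :=
      Finset.sum_le_sum_of_subset_of_nonneg (Finset.subset_univ _)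
        (fun i _ _ => hnonneg u i)
    simpa using this
  have hAuv_le_dv : A u v ≤ d v := by
    have : ({u} : Finset (Fin n)).sum (A v) ≤ ∑ z, A v z :=
      Finset.sum_le_sum_of_subset_of_nonneg (Finset.subset_univ _)
        (fun i _ _ => hnonneg v i)
    simpa [hAsym u v] using this
  have hQle : x ⬝ᵥ (L *ᵥ x) ≤ 2 * ((d u)⁻¹ + (d v)⁻¹) := by
    rw [hQ]
    have h1 : 0 ≤ A u u * (d u)⁻¹ ^ 2 := by
      have := hnonneg u u; positivity
    have h2 : 0 ≤ A v v * (d v)⁻¹ ^ 2 := by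
      have := hnonneg v v; positivity
    have h3 : 2 * A u v * ((d u)⁻¹ * (d v)⁻¹) ≤ (d u)⁻¹ + (d v)⁻¹ := by
      have ha : A u v * ((d u)⁻¹ * (d v)⁻¹) ≤ (d u)⁻¹ := by
        rw [← mul_assoc]
        calc A u v * (d u)⁻¹ * (d v)⁻¹ ≤ d v * (d u)⁻¹ * (d v)⁻¹ := by
              apply mul_le_mul_of_nonneg_right (mul_le_mul_of_nonneg_right hAuv_le_dv (by positivity)) (by positivity)
          _ = (d u)⁻¹ := by field_simp
      have hb : A u v * ((d u)⁻¹ * (d v)⁻¹) ≤ (d v)⁻¹ := by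
        rw [← mul_assoc]
        calc A u v * (d u)⁻¹ * (d v)⁻¹ ≤ d u * (d u)⁻¹ * (d v)⁻¹ := by
              apply mul_le_mul_of_nonneg_right (mul_le_mul_of_nonneg_right hAuv_le_du (by positivity)) (by positivity)
          _ = (d v)⁻¹ := by field_simp
      linarith
    linarith
  -- conclude
  have hs : x u - x v = (d u)⁻¹ + (d v)⁻¹ := by rw [hxu, hxv]; ring
  rw [hs, le_div_iff₀ hQpos]
  have hrepl : ((1 : ℝ) / ∑ z, A u z + 1 / ∑ z, A v z) = (d u)⁻¹ + (d v)⁻¹ := by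
    simp [hd, one_div]
  rw [hrepl]
  calc (1/2 : ℝ) * ((d u)⁻¹ + (d v)⁻¹) * (x ⬝ᵥ (L *ᵥ x))
      ≤ (1/2) * ((d u)⁻¹ + (d v)⁻¹) * (2 * ((d u)⁻¹ + (d v)⁻¹)) := by
        apply mul_le_mul_of_nonneg_left hQle (by positivity)
    _ = ((d u)⁻¹ + (d v)⁻¹) ^ 2 := by ring
end

section
/- Let G be a finite connected weighted undirected graph on n ≥ 2 vertices with symmetric nonnegative weight matrix A, all degrees d_u = Σ_v A_{uv} positive, and Laplacian L = D − A. Let λ₂ denote the second-largest eigenvalue of the symmetric matrix N = D^{-1/2} A D^{-1/2} (equivalently, of the transition matrix P = D^{-1}A), and assume λ₂ < 1. Then for any two distinct vertices u and v and any vector x : V → ℝ with xᵀ L x > 0, one has (x_u − x_v)² / (xᵀ L x) ≤ (1/(1−λ₂))(1/d_u + 1/d_v); that is, the effective resistance satisfies R_{u,v} ≤ (1/(1−λ₂))(1/d_u + 1/d_v). -/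
/-!
Let `c` be the degree-weighted mean of `x` and `z = D^{1/2} (x - c 𝟙)`. Then `z` is orthogonal
to `D^{1/2} 𝟙`, an eigenvector of `N` for the eigenvalue `1`. Since all eigenvalues but the top
one are at most `λ₂ < 1`, that eigenvector has no component along the other eigenvectors, so
`z` has none along the top one and `zᵀ N z ≤ λ₂ ‖z‖²`. As `xᵀ L x = zᵀ (I - N) z`, this is
the Poincaré inequality
  `xᵀ L x ≥ (1 - λ₂) ∑ d_i (x_i - c)² ≥ (1 - λ₂) (d_u (x_u - c)² + d_v (x_v - c)²)`,
and Cauchy–Schwarz gives `(x_u - x_v)² ≤ (d_u (x_u - c)² + d_v (x_v - c)²) (1/d_u + 1/d_v)`.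
-/

open Matrix

theorem Antitone.le_second_of_ne_first {α : Type*} [Preorder α] {n : ℕ} {f : Fin n → α}
    {e : Equiv.Perm (Fin n)} (hf : Antitone (f ∘ e)) (h1 : 1 < n) {i : Fin n}
    (hi : i ≠ e ⟨0, by omega⟩) : f i ≤ f (e ⟨1, h1⟩) := by
  have h0 : (e.symm i : ℕ) ≠ 0 := fun h => by
    have : e.symm i = ⟨0, by omega⟩ := Fin.ext h
    exact hi (by rw [← this, e.apply_symm_apply])
  have h1i : (⟨1, h1⟩ : Fin n) ≤ e.symm i := Fin.le_def.mpr (Nat.one_le_iff_ne_zero.mpr h0)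
  simpa using hf h1i

theorem sub_sq_le_mul_one_div_add_one_div {p q : ℝ} (hp : 0 < p) (hq : 0 < q) (a b : ℝ) :
    (a - b) ^ 2 ≤ (p * a ^ 2 + q * b ^ 2) * (1 / p + 1 / q) := by
  have key : (p * a ^ 2 + q * b ^ 2) * (1 / p + 1 / q) - (a - b) ^ 2 =
      (p * a + q * b) ^ 2 / (p * q) := by
    field_simp
    ring
  have : 0 ≤ (p * a + q * b) ^ 2 / (p * q) := by positivity
  linarith

theorem OrthonormalBasis.dotProduct_eq_sum_mul {ι : Type*} [Fintype ι]
    (b : OrthonormalBasis ι ℝ (EuclideanSpace ℝ ι)) (g h : ι → ℝ) :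
    g ⬝ᵥ h = ∑ i, (⇑(b i) ⬝ᵥ g) * (⇑(b i) ⬝ᵥ h) := by
  have := b.sum_inner_mul_inner (WithLp.toLp 2 g) (WithLp.toLp 2 h)
  simp only [EuclideanSpace.inner_eq_star_dotProduct, star_trivial] at this
  rw [dotProduct_comm g h, ← this]
  simp only [dotProduct_comm h]

namespace Matrix

variable {ι : Type*} [Fintype ι]

theorem IsSymm.vecMul_eq_mulVec {R : Type*} [CommSemiring R] {M : Matrix ι ι R} (hM : M.IsSymm)
    (v : ι → R) : v ᵥ* M = M *ᵥ v := by
  rw [← vecMul_transpose, hM.eq]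

theorem IsSymm.dotProduct_mulVec_sub_smul {R : Type*} [CommRing R] {M : Matrix ι ι R}
    (hM : M.IsSymm) {φ : ι → R} (hφ : M *ᵥ φ = 0) (x : ι → R) (c : R) :
    (x - c • φ) ⬝ᵥ (M *ᵥ (x - c • φ)) = x ⬝ᵥ (M *ᵥ x) := by
  simp only [mulVec_sub, mulVec_smul, hφ, smul_zero, sub_zero, sub_dotProduct, smul_dotProduct,
    dotProduct_mulVec φ, hM.vecMul_eq_mulVec, zero_dotProduct]

noncomputable def normalizedAdjacency (A : Matrix ι ι ℝ) (d : ι → ℝ) : Matrix ι ι ℝ :=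
  of fun i j => A i j / (√(d i) * √(d j))

variable {A : Matrix ι ι ℝ} {d : ι → ℝ}

theorem normalizedAdjacency_mulVec_sqrt (hd : ∀ i, 0 < d i) (hrow : ∀ i, ∑ j, A i j = d i) :
    normalizedAdjacency A d *ᵥ (Real.sqrt ∘ d) = Real.sqrt ∘ d := by
  ext i
  have hterm : ∀ j, A i j / (√(d i) * √(d j)) * √(d j) = A i j / √(d i) := fun j => by
    have := (Real.sqrt_pos.mpr (hd j)).ne'
    field_simp
  simp only [mulVec, dotProduct, normalizedAdjacency, of_apply, Function.comp_apply, hterm,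
    ← Finset.sum_div, hrow, Real.div_sqrt]

variable [DecidableEq ι]

theorem IsHermitian.dotProduct_mulVec_eigenvectorBasis {N : Matrix ι ι ℝ} (hN : N.IsHermitian)
    (i : ι) (w : ι → ℝ) :
    ⇑(hN.eigenvectorBasis i) ⬝ᵥ (N *ᵥ w) =
      hN.eigenvalues i * (⇑(hN.eigenvectorBasis i) ⬝ᵥ w) := by
  rw [dotProduct_mulVec, (isHermitian_iff_isSymm.mp hN).vecMul_eq_mulVec,
    mulVec_eigenvectorBasis, smul_dotProduct, smul_eq_mul]

theorem IsHermitian.dotProduct_mulVec_le_of_dotProduct_eq_zero {N : Matrix ι ι ℝ}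
    (hN : N.IsHermitian) {i₀ : ι} {lam μ : ℝ} (hle : ∀ i ≠ i₀, hN.eigenvalues i ≤ lam)
    (hlt : lam < μ) {φ w : ι → ℝ} (hφ : φ ≠ 0) (hNφ : N *ᵥ φ = μ • φ) (hw : φ ⬝ᵥ w = 0) :
    w ⬝ᵥ (N *ᵥ w) ≤ lam * (w ⬝ᵥ w) := by
  set b := hN.eigenvectorBasis
  have hφ_coeff : ∀ i ≠ i₀, ⇑(b i) ⬝ᵥ φ = 0 := by
    intro i hi
    have h := hN.dotProduct_mulVec_eigenvectorBasis i φ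
    rw [hNφ, dotProduct_smul, smul_eq_mul] at h
    have : (μ - hN.eigenvalues i) * (⇑(b i) ⬝ᵥ φ) = 0 := by linarith
    exact (mul_eq_zero.mp this).resolve_left (by linarith [hle i hi])
  have hφ_coeff₀ : ⇑(b i₀) ⬝ᵥ φ ≠ 0 := by
    intro h₀
    refine hφ (dotProduct_self_eq_zero.mp ?_)
    rw [b.dotProduct_eq_sum_mul]
    refine Finset.sum_eq_zero fun i _ => ?_
    obtain rfl | hi := eq_or_ne i i₀
    · rw [h₀, zero_mul]
    · rw [hφ_coeff i hi, zero_mul]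
  have hw_coeff₀ : ⇑(b i₀) ⬝ᵥ w = 0 := by
    rw [b.dotProduct_eq_sum_mul, Finset.sum_eq_single i₀ (fun i _ hi => by
      rw [hφ_coeff i hi, zero_mul]) (by simp)] at hw
    exact (mul_eq_zero.mp hw).resolve_left hφ_coeff₀
  rw [b.dotProduct_eq_sum_mul, b.dotProduct_eq_sum_mul, Finset.mul_sum]
  refine Finset.sum_le_sum fun i _ => ?_
  rw [hN.dotProduct_mulVec_eigenvectorBasis]
  obtain rfl | hi := eq_or_ne i i₀
  · simp [hw_coeff₀]
  · nlinarith [hle i hi, mul_self_nonneg (⇑(b i) ⬝ᵥ w)]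

theorem dotProduct_diagonal_sub_mulVec (hd : ∀ i, 0 < d i) (x : ι → ℝ) :
    x ⬝ᵥ ((diagonal d - A) *ᵥ x) =
      (Real.sqrt ∘ d * x) ⬝ᵥ ((1 - normalizedAdjacency A d) *ᵥ (Real.sqrt ∘ d * x)) := by
  have hs : ∀ i, √(d i) ≠ 0 := fun i => (Real.sqrt_pos.mpr (hd i)).ne'
  rw [sub_mulVec, dotProduct_sub, sub_mulVec, one_mulVec, dotProduct_sub]
  congr 1
  · refine Finset.sum_congr rfl fun i _ => ?_
    simp only [mulVec_diagonal, Pi.mul_apply, Function.comp_apply]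
    rw [mul_mul_mul_comm, Real.mul_self_sqrt (hd i).le]
    ring
  · simp only [dotProduct, mulVec, normalizedAdjacency, of_apply, Pi.mul_apply,
      Function.comp_apply, Finset.mul_sum]
    refine Finset.sum_congr rfl fun i _ => Finset.sum_congr rfl fun j _ => ?_
    field_simp [hs i, hs j]

theorem poincare_inequality_normalizedAdjacency [Nonempty ι] (hd : ∀ i, 0 < d i)
    (hrow : ∀ i, ∑ j, A i j = d i) (hN : (normalizedAdjacency A d).IsHermitian) {i₀ : ι}
    {lam : ℝ} (hle : ∀ i ≠ i₀, hN.eigenvalues i ≤ lam) (hlam : lam < 1) (x : ι → ℝ) :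
    (1 - lam) * ∑ i, d i * (x i - (∑ j, d j * x j) / ∑ j, d j) ^ 2 ≤
      x ⬝ᵥ ((diagonal d - A) *ᵥ x) := by
  set N := normalizedAdjacency A d
  set s := Real.sqrt ∘ d
  set c := (∑ j, d j * x j) / ∑ j, d j
  set z := s * (x - c • 1)
  have hss : ∀ i, s i * s i = d i := fun i => Real.mul_self_sqrt (hd i).le
  have hNs : N *ᵥ s = s := normalizedAdjacency_mulVec_sqrt hd hrow
  have hs0 : s ≠ 0 := fun h =>
    (Real.sqrt_pos.mpr (hd (Classical.arbitrary ι))).ne' (congrFun h _)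
  have hQ : x ⬝ᵥ ((diagonal d - A) *ᵥ x) = z ⬝ᵥ ((1 - N) *ᵥ z) := by
    have hz : z = s * x - c • s := by simp only [z, mul_sub, mul_smul_comm, mul_one]
    have hMs : (1 - N) *ᵥ s = 0 := by rw [sub_mulVec, one_mulVec, hNs, sub_self]
    rw [dotProduct_diagonal_sub_mulVec hd, hz,
      (isSymm_one.sub (isHermitian_iff_isSymm.mp hN)).dotProduct_mulVec_sub_smul hMs]
  have hsz : s ⬝ᵥ z = 0 := by
    have hsum : 0 < ∑ j, d j := Finset.sum_pos (fun j _ => hd j) Finset.univ_nonempty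
    simp only [z, dotProduct, Pi.mul_apply, Pi.sub_apply, Pi.smul_apply, Pi.one_apply,
      smul_eq_mul, mul_one, ← mul_assoc, hss, mul_sub, Finset.sum_sub_distrib, ← Finset.sum_mul]
    rw [mul_div_cancel₀ _ hsum.ne', sub_self]
  have hzz : z ⬝ᵥ z = ∑ i, d i * (x i - c) ^ 2 := Finset.sum_congr rfl fun i _ => by
    simp only [z, Pi.mul_apply, Pi.sub_apply, Pi.smul_apply, Pi.one_apply, smul_eq_mul, mul_one]
    rw [← hss]
    ring
  have hgap := hN.dotProduct_mulVec_le_of_dotProduct_eq_zero hle hlam hs0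
    (by rw [hNs, one_smul]) hsz
  rw [hQ, ← hzz, sub_mulVec, one_mulVec, dotProduct_sub]
  linarith

end Matrix

/-- **Upper bound on effective resistance (Lovász, Corollary 3.3).** For a finite connected
weighted undirected graph on `n ≥ 2` vertices with symmetric nonnegative weights, positive
degrees and Laplacian `L = D - A`, let `λ₂` be the second-largest eigenvalue of the
normalized adjacency matrix `N = D^{-1/2} A D^{-1/2}` (expressed here by saying that some
reindexing of the eigenvalues of the Hermitian matrix `N` is antitone and `λ₂` is its value
at index `1`), with `λ₂ < 1`. Then for all distinct `u, v` and every `x` with `xᵀ L x > 0`,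
`(x_u - x_v)² / (xᵀ L x) ≤ (1/(1-λ₂)) (1/d_u + 1/d_v)`, i.e. the variationally defined
effective resistance satisfies `R_{u,v} ≤ (1/(1-λ₂))(1/d_u + 1/d_v)`. -/
theorem effective_resistance_upper_bound {n : ℕ} (hn : 2 ≤ n)
    (A : Matrix (Fin n) (Fin n) ℝ)
    (hdeg : ∀ u : Fin n, 0 < ∑ w, A u w)
    (N : Matrix (Fin n) (Fin n) ℝ)
    (hNdef : N = fun i j => A i j / (Real.sqrt (∑ w, A i w) * Real.sqrt (∑ w, A j w)))
    (hNH : N.IsHermitian)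
    (lam2 : ℝ)
    (hlam2 : ∃ e : Equiv.Perm (Fin n), Antitone (hNH.eigenvalues ∘ e) ∧
      lam2 = hNH.eigenvalues (e ⟨1, by omega⟩))
    (hgap : lam2 < 1)
    (u v : Fin n) (huv : u ≠ v)
    (x : Fin n → ℝ) :
    (x u - x v) ^ 2 / (x ⬝ᵥ ((Matrix.diagonal (fun w => ∑ z, A w z) - A) *ᵥ x))
      ≤ (1 / (1 - lam2)) * (1 / (∑ z, A u z) + 1 / (∑ z, A v z)) := by
  obtain ⟨e, hanti, hlam2⟩ := hlam2
  subst hNdef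
  have : Nonempty (Fin n) := ⟨⟨0, by omega⟩⟩
  set d : Fin n → ℝ := fun w => ∑ z, A w z
  have hdu : 0 < d u := hdeg u
  have hdv : 0 < d v := hdeg v
  have hgap_pos : 0 < 1 - lam2 := sub_pos.mpr hgap
  have hpoincare := poincare_inequality_normalizedAdjacency (d := d) hdeg (fun _ => rfl) hNH
    (fun i hi => hlam2 ▸ hanti.le_second_of_ne_first (by omega) hi) hgap x
  set c := (∑ j, d j * x j) / ∑ j, d j
  set Q := x ⬝ᵥ ((diagonal d - A) *ᵥ x)
  have hQ : (1 - lam2) * (d u * (x u - c) ^ 2 + d v * (x v - c) ^ 2) ≤ Q := by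
    refine le_trans (mul_le_mul_of_nonneg_left ?_ hgap_pos.le) hpoincare
    exact Finset.add_le_sum (f := fun i => d i * (x i - c) ^ 2)
      (fun i _ => mul_nonneg (hdeg i).le (sq_nonneg _)) (Finset.mem_univ u) (Finset.mem_univ v)
      huv
  have hcs := sub_sq_le_mul_one_div_add_one_div hdu hdv (x u - c) (x v - c)
  rw [sub_sub_sub_cancel_right] at hcs
  refine div_le_of_le_mul₀ (le_trans (by positivity) hQ) (by positivity) ?_
  calc (x u - x v) ^ 2
      ≤ (d u * (x u - c) ^ 2 + d v * (x v - c) ^ 2) * (1 / d u + 1 / d v) := hcs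
    _ ≤ Q / (1 - lam2) * (1 / d u + 1 / d v) := by
      gcongr
      rwa [le_div_iff₀ hgap_pos, mul_comm]
    _ = _ := by ring
end

section
/- Let A be a symmetric n×n real matrix with nonnegative entries and all row sums d_u = Σ_v A_{uv} positive, let D be the diagonal degree matrix and P = D^{-1}A the transition matrix. Then for every r ≥ 1 and every s with 0 ≤ s ≤ r − 1, one has (Pᵀ)^s · A · P^{r−1−s} = D · P^r; entrywise, Σ_{u,v} A_{uv} (P^s)_{u,a} (P^{r−1−s})_{v,b} = d_a · (P^r)_{a,b} for all vertices a, b. In particular, the distribution of the edge (u', v') returned by the PathSampling procedure—which samples an edge (u,v) with probability proportional to A_{uv}, samples s uniformly from {0, …, r−1}, walks u for s random-walk steps to reach u' and walks v for r−1−s steps to reach v'—is proportional to the (u',v') entry of D · (D^{-1}A)^r and does not depend on s. -/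
/-!
Symmetry of `A` makes the random walk reversible, `Pᵀ A = A D⁻¹ A = A P`. Pushing `A` through
`(Pᵀ)ˢ` therefore gives `(Pᵀ)ˢ A Pᵗ = A P^(s+t) = D P^(s+t+1)`, whatever the split of `r - 1`
into `s + t`.
-/

open Matrix

variable {ι K : Type*} [Fintype ι] [Field K]

/-- The random-walk matrix `D⁻¹A` of a weight matrix `A`. -/
def transitionMatrix (A : Matrix ι ι K) : Matrix ι ι K :=
  of fun i j => A i j / ∑ w, A i w

theorem diagonal_degree_mul_transitionMatrix [DecidableEq ι] {A : Matrix ι ι K}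
    (hdeg : ∀ u, ∑ w, A u w ≠ 0) :
    diagonal (fun u => ∑ w, A u w) * transitionMatrix A = A := by
  ext i j
  rw [diagonal_mul, transitionMatrix, of_apply, mul_div_cancel₀ _ (hdeg i)]

theorem transpose_transitionMatrix_mul {A : Matrix ι ι K} (hA : A.IsSymm) :
    (transitionMatrix A)ᵀ * A = A * transitionMatrix A := by
  ext i j
  simp only [mul_apply, transpose_apply, transitionMatrix, of_apply]
  refine Finset.sum_congr rfl fun k _ => ?_
  rw [hA.apply i k]
  ring

theorem transpose_transitionMatrix_pow_mul [DecidableEq ι] {A : Matrix ι ι K} (hA : A.IsSymm)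
    (t : ℕ) :
    (transitionMatrix A)ᵀ ^ t * A = A * transitionMatrix A ^ t :=
  ((show SemiconjBy A (transitionMatrix A) (transitionMatrix A)ᵀ from
    (transpose_transitionMatrix_mul hA).symm).pow_right t).symm

theorem transpose_mul_mul_apply {R : Type*} [CommSemiring R] (M A N : Matrix ι ι R) (a b : ι) :
    (Mᵀ * A * N) a b = ∑ u, ∑ v, A u v * M u a * N v b := by
  simp only [mul_apply, transpose_apply, Finset.sum_mul]
  rw [Finset.sum_comm]
  refine Finset.sum_congr rfl fun u _ => Finset.sum_congr rfl fun v _ => ?_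
  ring

theorem transpose_transitionMatrix_pow_mul_mul_pow [DecidableEq ι] {A : Matrix ι ι K}
    (hA : A.IsSymm) (hdeg : ∀ u, ∑ w, A u w ≠ 0) (s t : ℕ) :
    (transitionMatrix A)ᵀ ^ s * A * transitionMatrix A ^ t =
      diagonal (fun u => ∑ w, A u w) * transitionMatrix A ^ (s + t + 1) := by
  rw [transpose_transitionMatrix_pow_mul hA, mul_assoc, ← pow_add, pow_succ', ← mul_assoc,
    diagonal_degree_mul_transitionMatrix hdeg]

theorem pathsampling_distribution_general {n : ℕ}
    (A : Matrix (Fin n) (Fin n) ℝ)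
    (hsymm : A.IsSymm)
    (hdeg : ∀ u : Fin n, 0 < ∑ w, A u w)
    (P : Matrix (Fin n) (Fin n) ℝ)
    (hP : P = fun i j => A i j / ∑ w, A i w)
    (r s : ℕ) (hr : 1 ≤ r) (hs : s ≤ r - 1) :
    Pᵀ ^ s * A * P ^ (r - 1 - s) = Matrix.diagonal (fun u => ∑ w, A u w) * P ^ r ∧
      ∀ a b : Fin n,
        (∑ u, ∑ v, A u v * (P ^ s) u a * (P ^ (r - 1 - s)) v b)
          = (∑ w, A a w) * (P ^ r) a b := by
  have key : Pᵀ ^ s * A * P ^ (r - 1 - s) = diagonal (fun u => ∑ w, A u w) * P ^ r := by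
    rw [show P = transitionMatrix A from hP,
      transpose_transitionMatrix_pow_mul_mul_pow hsymm fun u => (hdeg u).ne',
      show s + (r - 1 - s) + 1 = r by omega]
  refine ⟨key, fun a b => ?_⟩
  rw [← transpose_mul_mul_apply, transpose_pow, key, diagonal_mul]

/-- **Correctness of PathSampling.** For a symmetric nonnegative weight matrix `A` with
positive degrees `d_u = ∑_v A_{uv}`, degree matrix `D` and transition matrix `P = D⁻¹A`,
for every `r ≥ 1` and every `0 ≤ s ≤ r - 1` one has `(Pᵀ)ˢ · A · P^{r-1-s} = D · Pʳ`;
entrywise, `∑_{u,v} A_{uv} (Pˢ)_{ua} (P^{r-1-s})_{vb} = d_a (Pʳ)_{ab}` for all `a, b`.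
Hence the distribution of the edge `(u',v')` returned by PathSampling (sample an edge
`(u,v)` ∝ `A_{uv}`, a uniform `s ∈ {0,…,r-1}`, walk `u` for `s` steps to `u'` and `v` for
`r-1-s` steps to `v'`) is proportional to the `(u',v')` entry of `D (D⁻¹A)ʳ` and is
independent of `s`. -/
theorem pathsampling_distribution {n : ℕ}
    (A : Matrix (Fin n) (Fin n) ℝ)
    (hsymm : A.IsSymm) (hnonneg : ∀ i j, 0 ≤ A i j)
    (hdeg : ∀ u : Fin n, 0 < ∑ w, A u w)
    (P : Matrix (Fin n) (Fin n) ℝ)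
    (hP : P = fun i j => A i j / ∑ w, A i w)
    (r s : ℕ) (hr : 1 ≤ r) (hs : s ≤ r - 1) :
    Pᵀ ^ s * A * P ^ (r - 1 - s) = Matrix.diagonal (fun u => ∑ w, A u w) * P ^ r ∧
      ∀ a b : Fin n,
        (∑ u, ∑ v, A u v * (P ^ s) u a * (P ^ (r - 1 - s)) v b)
          = (∑ w, A a w) * (P ^ r) a b :=
  pathsampling_distribution_general A hsymm hdeg P hP r s hr hs
end
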